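/- arXiv:1611.03017 — 3 statements merged into one kernel-verified Lean document; each statement's English description precedes it below -/
import Mathlib

section
/- Let k ≥ 1 and c : Fin k → ℝ with c_j > 0 for all j. Assume the last index attains the minimum, i.e. c_{k−1} ≤ c_j for all j, and let m be the number of indices j with c_j = c_{k−1}. For s ∈ (0,1) define H(s) = ∫_{{ρ ∈ ℝ^{k−1} : ρ_j ≤ 0 for all j and Σ_{j<k−1} ρ_j ≥ log s}} exp( Σ_{j<k−1} c_j ρ_j + c_{k−1} · (log s − Σ_{j<k−1} ρ_j) ) dρ, with Lebesgue measure on ℝ^{k−1} (so H(s) = s^{c_0} when k = 1). Then the function s ↦ log H(s) − c_{k−1} · log s − (m−1) · log|log s| is bounded on the interval (0, 1/2]. -/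
/-!
With `L = log s` and `d j = c j.castSucc - c (Fin.last n) ≥ 0`, the integrand is
`exp (c (Fin.last n) * L) * ∏ j, exp (d j * ρ j)`, and the domain of integration lies between the
cubes `[L / (n + 1), 0]ⁿ` and `[L, 0]ⁿ`. On a cube the integral factors: a factor with `d j = 0`
is the side length, while a factor with `d j > 0` stays between two positive constants once the
side is bounded below. So the integral is comparable to `|L| ^ p`, where `p = m - 1` counts the
`j < n` with `c j = c (Fin.last n)`.
-/

open MeasureTheory

theorem integral_Icc_exp_mul {d : ℝ} (hd : d ≠ 0) {a b : ℝ} (hab : a ≤ b) :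
    ∫ x in Set.Icc a b, Real.exp (d * x) = (Real.exp (d * b) - Real.exp (d * a)) / d := by
  rw [integral_Icc_eq_integral_Ioc, ← intervalIntegral.integral_of_le hab,
    intervalIntegral.integral_comp_mul_left (fun x => Real.exp x) hd, integral_exp,
    smul_eq_mul, inv_mul_eq_div]

theorem integral_Icc_exp_mul_mem_Icc {d : ℝ} (hd : 0 < d) {a a₀ : ℝ} (ha : a ≤ a₀)
    (ha₀ : a₀ ≤ 0) :
    ∫ x in Set.Icc a 0, Real.exp (d * x) ∈ Set.Icc ((1 - Real.exp (d * a₀)) / d) (1 / d) := by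
  rw [integral_Icc_exp_mul hd.ne' (ha.trans ha₀), mul_zero, Real.exp_zero]
  have hmono : Real.exp (d * a) ≤ Real.exp (d * a₀) := by gcongr
  constructor <;> gcongr; linarith [Real.exp_pos (d * a)]

theorem setIntegral_univ_pi_prod {ι 𝕜 : Type*} [Fintype ι] [RCLike 𝕜] {E : ι → Type*}
    {mE : ∀ i, MeasurableSpace (E i)} {μ : (i : ι) → Measure (E i)} [∀ i, SigmaFinite (μ i)]
    (s : (i : ι) → Set (E i)) (f : (i : ι) → E i → 𝕜) :
    ∫ x in Set.univ.pi s, ∏ i, f i (x i) ∂(Measure.pi μ) = ∏ i, ∫ x in s i, f i x ∂(μ i) := by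
  rw [Measure.restrict_pi_pi, integral_fintype_prod_eq_prod]

theorem exp_sum_mul_add_mul_sub_sum {ι : Type*} [Fintype ι] (a : ι → ℝ) (b L : ℝ) (ρ : ι → ℝ) :
    Real.exp ((∑ j, a j * ρ j) + b * (L - ∑ j, ρ j))
      = Real.exp (b * L) * ∏ j, Real.exp ((a j - b) * ρ j) := by
  rw [← Real.exp_sum, ← Real.exp_add]
  congr 1
  simp only [sub_mul, Finset.sum_sub_distrib, ← Finset.mul_sum]
  ring

theorem Fin.card_filter_eq_last {α : Type*} {n : ℕ} (c : Fin (n + 1) → α) [DecidableEq α] :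
    (Finset.univ.filter fun j => c j = c (Fin.last n)).card
      = (Finset.univ.filter fun j : Fin n => c j.castSucc = c (Fin.last n)).card + 1 := by
  rw [Finset.card_filter, Finset.card_filter, Fin.sum_univ_castSucc, if_pos rfl]

theorem setOf_nonpos_sum_ge_subset_pi_Icc {ι : Type*} [Fintype ι] (L : ℝ) :
    {ρ : ι → ℝ | (∀ j, ρ j ≤ 0) ∧ L ≤ ∑ j, ρ j} ⊆ Set.univ.pi fun _ => Set.Icc L 0 := by
  rintro ρ ⟨hρ, hL⟩ j -
  refine ⟨?_, hρ j⟩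
  calc L ≤ ∑ i, ρ i := hL
    _ ≤ ∑ i ∈ {j}, ρ i :=
        Finset.sum_le_sum_of_subset_of_nonpos' (Finset.subset_univ _) fun i _ _ => hρ i
    _ = ρ j := Finset.sum_singleton _ _

theorem pi_Icc_subset_setOf_nonpos_sum_ge {n : ℕ} {L : ℝ} (hL : L ≤ 0) :
    (Set.univ.pi fun _ : Fin n => Set.Icc (L / (n + 1)) 0)
      ⊆ {ρ : Fin n → ℝ | (∀ j, ρ j ≤ 0) ∧ L ≤ ∑ j, ρ j} := by
  intro ρ hρ
  refine ⟨fun j => (hρ j trivial).2, ?_⟩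
  calc L ≤ n * (L / (n + 1)) := by
        rw [mul_div_assoc', le_div_iff₀ (by positivity)]; nlinarith
    _ = ∑ _j : Fin n, L / (n + 1) := by simp
    _ ≤ ∑ j, ρ j := Finset.sum_le_sum fun j _ => (hρ j trivial).1

theorem exists_bounds_setIntegral_pi_Icc_prod_exp {n : ℕ} (d : Fin n → ℝ) (hd : ∀ j, 0 ≤ d j)
    {a₀ : ℝ} (ha₀ : a₀ < 0) :
    ∃ k₁ k₂ : ℝ, 0 < k₁ ∧ ∀ a ≤ a₀,
      k₁ * (-a) ^ (Finset.univ.filter fun j => d j = 0).card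
          ≤ ∫ ρ in Set.univ.pi fun _ => Set.Icc a 0, ∏ j, Real.exp (d j * ρ j) ∧
        ∫ ρ in Set.univ.pi fun _ => Set.Icc a 0, ∏ j, Real.exp (d j * ρ j)
          ≤ k₂ * (-a) ^ (Finset.univ.filter fun j => d j = 0).card := by
  classical
  set Z := Finset.univ.filter fun j => d j = 0
  set P := Finset.univ.filter fun j => ¬d j = 0
  have hP : ∀ j ∈ P, 0 < d j := fun j hj => (hd j).lt_of_ne' (Finset.mem_filter.1 hj).2
  have hk₁ : ∀ j ∈ P, 0 < (1 - Real.exp (d j * a₀)) / d j := fun j hj =>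
    div_pos (sub_pos.2 (Real.exp_lt_one_iff.2 (mul_neg_of_pos_of_neg (hP j hj) ha₀))) (hP j hj)
  refine ⟨∏ j ∈ P, (1 - Real.exp (d j * a₀)) / d j, ∏ j ∈ P, 1 / d j, Finset.prod_pos hk₁,
    fun a ha => ?_⟩
  have hsplit : ∫ ρ in Set.univ.pi fun _ => Set.Icc a 0, ∏ j, Real.exp (d j * ρ j)
      = (-a) ^ Z.card * ∏ j ∈ P, ∫ x in Set.Icc a 0, Real.exp (d j * x) := by
    rw [volume_pi, setIntegral_univ_pi_prod _ fun j x => Real.exp (d j * x),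
      ← Finset.prod_filter_mul_prod_filter_not Finset.univ fun j => d j = 0]
    congr 1
    rw [← Finset.prod_const]
    refine Finset.prod_congr rfl fun j hj => ?_
    simp [(Finset.mem_filter.1 hj).2, ha.trans ha₀.le]
  have hfactor j (hj : j ∈ P) := integral_Icc_exp_mul_mem_Icc (hP j hj) ha ha₀.le
  have hpow : 0 ≤ (-a) ^ Z.card := pow_nonneg (by linarith) _
  rw [hsplit, mul_comm _ ((-a) ^ _), mul_comm _ ((-a) ^ _)]
  exact ⟨mul_le_mul_of_nonneg_left
      (Finset.prod_le_prod (fun j hj => (hk₁ j hj).le) fun j hj => (hfactor j hj).1) hpow,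
    mul_le_mul_of_nonneg_left (Finset.prod_le_prod
      (fun j hj => (hk₁ j hj).le.trans (hfactor j hj).1) fun j hj => (hfactor j hj).2) hpow⟩

theorem exists_bounds_setIntegral_prod_exp {n : ℕ} (d : Fin n → ℝ) (hd : ∀ j, 0 ≤ d j)
    {L₀ : ℝ} (hL₀ : L₀ < 0) :
    ∃ k₁ k₂ : ℝ, 0 < k₁ ∧ ∀ L ≤ L₀,
      k₁ * (-L) ^ (Finset.univ.filter fun j => d j = 0).card
          ≤ ∫ ρ in {ρ : Fin n → ℝ | (∀ j, ρ j ≤ 0) ∧ L ≤ ∑ j, ρ j}, ∏ j, Real.exp (d j * ρ j) ∧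
        ∫ ρ in {ρ : Fin n → ℝ | (∀ j, ρ j ≤ 0) ∧ L ≤ ∑ j, ρ j}, ∏ j, Real.exp (d j * ρ j)
          ≤ k₂ * (-L) ^ (Finset.univ.filter fun j => d j = 0).card := by
  set p := (Finset.univ.filter fun j => d j = 0).card
  have ht : (0 : ℝ) < n + 1 := by positivity
  obtain ⟨k₁, k₂, hk₁, hcube⟩ :=
    exists_bounds_setIntegral_pi_Icc_prod_exp d hd (div_neg_of_neg_of_pos hL₀ ht)
  refine ⟨k₁ / (n + 1) ^ p, k₂, by positivity, fun L hL => ?_⟩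
  have hL_le : L ≤ L₀ / (n + 1) :=
    hL.trans ((le_div_iff₀ ht).2 (by nlinarith [n.cast_nonneg (α := ℝ)]))
  have hLt_le : L / (n + 1) ≤ L₀ / (n + 1) := div_le_div_of_nonneg_right hL ht.le
  have hG : Continuous fun ρ : Fin n → ℝ => ∏ j, Real.exp (d j * ρ j) := by fun_prop
  have hG_nonneg : 0 ≤ fun ρ : Fin n → ℝ => ∏ j, Real.exp (d j * ρ j) := fun ρ =>
    Finset.prod_nonneg fun j _ => (Real.exp_pos _).le
  have hsub := setOf_nonpos_sum_ge_subset_pi_Icc (ι := Fin n) L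
  have hint : IntegrableOn (fun ρ : Fin n → ℝ => ∏ j, Real.exp (d j * ρ j))
      (Set.univ.pi fun _ => Set.Icc L 0) :=
    hG.continuousOn.integrableOn_compact (isCompact_univ_pi fun _ => isCompact_Icc)
  constructor
  · calc k₁ / (n + 1) ^ p * (-L) ^ p = k₁ * (-(L / (n + 1))) ^ p := by
          rw [← neg_div, div_pow]; ring
      _ ≤ _ := (hcube _ hLt_le).1
      _ ≤ _ := setIntegral_mono_set (hint.mono_set hsub) (ae_of_all _ hG_nonneg)
          (pi_Icc_subset_setOf_nonpos_sum_ge (hL.trans hL₀.le)).eventuallyLE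
  · calc _ ≤ _ := setIntegral_mono_set hint (ae_of_all _ hG_nonneg) hsub.eventuallyLE
      _ ≤ _ := (hcube _ hL_le).2

theorem abs_log_sub_log_le_of_mul_le_of_le_mul {x y k₁ k₂ : ℝ} (hk₁ : 0 < k₁) (hy : 0 < y)
    (h₁ : k₁ * y ≤ x) (h₂ : x ≤ k₂ * y) :
    |Real.log x - Real.log y| ≤ max |Real.log k₁| |Real.log k₂| := by
  have hx : 0 < x := (mul_pos hk₁ hy).trans_le h₁
  have hk₂ : 0 < k₂ := pos_of_mul_pos_left (hx.trans_le h₂) hy.le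
  have hlo := Real.log_le_log (mul_pos hk₁ hy) h₁
  have hhi := Real.log_le_log hx h₂
  rw [Real.log_mul hk₁.ne' hy.ne'] at hlo
  rw [Real.log_mul hk₂.ne' hy.ne'] at hhi
  rw [abs_le]
  constructor <;> linarith [neg_abs_le (Real.log k₁), le_abs_self (Real.log k₂),
    le_max_left |Real.log k₁| |Real.log k₂|, le_max_right |Real.log k₁| |Real.log k₂|]

theorem log_H_bounded_general
    (n : ℕ) (c : Fin (n + 1) → ℝ)
    (hmin : ∀ j, c (Fin.last n) ≤ c j)
    (m : ℕ) (hm : m = (Finset.univ.filter (fun j => c j = c (Fin.last n))).card) :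
    ∃ C : ℝ, ∀ s ∈ Set.Ioc (0 : ℝ) (1 / 2),
      abs
        (Real.log
            (∫ ρ in {ρ : Fin n → ℝ | (∀ j, ρ j ≤ 0) ∧ Real.log s ≤ ∑ j, ρ j},
              Real.exp ((∑ j, c j.castSucc * ρ j) +
                c (Fin.last n) * (Real.log s - ∑ j, ρ j)))
          - c (Fin.last n) * Real.log s
          - ((m : ℝ) - 1) * Real.log (abs (Real.log s))) ≤ C := by
  set d : Fin n → ℝ := fun j => c j.castSucc - c (Fin.last n)
  have hlog2 : -Real.log 2 < 0 := neg_neg_of_pos (Real.log_pos one_lt_two)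
  obtain ⟨k₁, k₂, hk₁, hbounds⟩ :=
    exists_bounds_setIntegral_prod_exp d (fun j => sub_nonneg.2 (hmin _)) hlog2
  have hmp : (m : ℝ) - 1 = (Finset.univ.filter fun j => d j = 0).card := by
    simp only [hm, Fin.card_filter_eq_last, d, sub_eq_zero]
    push_cast; ring
  refine ⟨max |Real.log k₁| |Real.log k₂|, fun s ⟨hs₀, hs⟩ => ?_⟩
  have hL : Real.log s ≤ -Real.log 2 := by
    simpa [Real.log_inv] using Real.log_le_log hs₀ hs
  have hLneg : 0 < -Real.log s := by linarith
  obtain ⟨hlo, hhi⟩ := hbounds _ hL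
  have hpos : 0 < (-Real.log s) ^ (Finset.univ.filter fun j => d j = 0).card := pow_pos hLneg _
  simp_rw [exp_sum_mul_add_mul_sub_sum]
  rw [integral_const_mul, Real.log_mul (Real.exp_pos _).ne' ((mul_pos hk₁ hpos).trans_le hlo).ne',
    Real.log_exp, abs_of_neg (neg_pos.1 hLneg), hmp, ← Real.log_pow]
  convert abs_log_sub_log_le_of_mul_le_of_le_mul hk₁ hpos hlo hhi using 2
  ring

/-- local model of the squared `L²`-norm near a normal crossings fiber.
With `k = n + 1 ≥ 1`, positive weights `c : Fin (n+1) → ℝ` whose minimum is attained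
at the last index, and `m` the number of indices attaining the minimum, the function
`s ↦ log H s - c (last) * log s - (m - 1) * log |log s|` is bounded on `(0, 1/2]`,
where `H s` is the integral in logarithmic coordinates described in the statement. -/
theorem log_H_bounded
    (n : ℕ) (c : Fin (n + 1) → ℝ) (hc : ∀ j, 0 < c j)
    (hmin : ∀ j, c (Fin.last n) ≤ c j)
    (m : ℕ) (hm : m = (Finset.univ.filter (fun j => c j = c (Fin.last n))).card) :
    ∃ C : ℝ, ∀ s ∈ Set.Ioc (0 : ℝ) (1 / 2),
      abs
        (Real.log
            (∫ ρ in {ρ : Fin n → ℝ | (∀ j, ρ j ≤ 0) ∧ Real.log s ≤ ∑ j, ρ j},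
              Real.exp ((∑ j, c j.castSucc * ρ j) +
                c (Fin.last n) * (Real.log s - ∑ j, ρ j)))
          - c (Fin.last n) * Real.log s
          - ((m : ℝ) - 1) * Real.log (abs (Real.log s))) ≤ C :=
  log_H_bounded_general n c hmin m hm
end

section
/- For all tuples x ∈ ℝ^a and y ∈ ℝ^b, P'(x ⧺ y) = P'(x) · P(y) + P(x) · P'(y), where x ⧺ y ∈ ℝ^{a+b} denotes the concatenation of the two tuples. -/
noncomputable def td (u : ℝ) : ℝ := if u = 0 then 1 else u / (Real.exp u - 1)

/-- `p`-th elementary symmetric polynomial of a tuple of reals. -/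
noncomputable def esymm {n : ℕ} (x : Fin n → ℝ) (p : ℕ) : ℝ :=
  ∑ t ∈ Finset.univ.powersetCard p, ∏ i ∈ t, x i

/-- `P(x) = (∏ td(x_i)) · Σ_p (−1)^p e_p(exp x)`. -/
noncomputable def Pcl {n : ℕ} (x : Fin n → ℝ) : ℝ :=
  (∏ i, td (x i)) *
    ∑ p ∈ Finset.range (n + 1), (-1 : ℝ) ^ p * esymm (fun i => Real.exp (x i)) p

/-- `P'(x) = (∏ td(x_i)) · Σ_p (−1)^p p e_p(exp x)`. -/
noncomputable def Pcl' {n : ℕ} (x : Fin n → ℝ) : ℝ :=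
  (∏ i, td (x i)) *
    ∑ p ∈ Finset.range (n + 1), (-1 : ℝ) ^ p * (p : ℝ) * esymm (fun i => Real.exp (x i)) p

/-- `P''(x) = (∏ td(x_i)) · Σ_p (−1)^p (p(p−1)/2) e_p(exp x)`. -/
noncomputable def Pcl'' {n : ℕ} (x : Fin n → ℝ) : ℝ :=
  (∏ i, td (x i)) *
    ∑ p ∈ Finset.range (n + 1),
      (-1 : ℝ) ^ p * ((p : ℝ) * ((p : ℝ) - 1) / 2) * esymm (fun i => Real.exp (x i)) p

/-! Proof idea: `∑ₚ (-1)^p eₚ(z) tᵖ = ∏ᵢ (1 - zᵢ t)`, so `P(x)` and `P'(x)` are `∏ td(xᵢ)` times the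
value and the derivative at `t = 1` of this polynomial for `z = exp x`. The polynomial of `x ⧺ y` is
the product of those of `x` and `y`, and the Leibniz rule for derivatives of polynomials does the
rest. -/

open Polynomial Finset

theorem Fin.prod_comp_append {M α : Type*} [CommMonoid M] {a b : ℕ} (f : α → M)
    (x : Fin a → α) (y : Fin b → α) :
    ∏ i, f (Fin.append x y i) = (∏ i, f (x i)) * ∏ i, f (y i) := by
  simp [Fin.prod_univ_add]

noncomputable def signedEsymmPoly {n : ℕ} (z : Fin n → ℝ) : ℝ[X] :=
  ∏ i, (1 - C (z i) * X)

theorem signedEsymmPoly_eq_sum {n : ℕ} (z : Fin n → ℝ) :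
    signedEsymmPoly z = ∑ p ∈ range (n + 1), C ((-1) ^ p * esymm z p) * X ^ p := by
  have hterm : ∀ i, 1 - C (z i) * X = 1 + C (-z i) * X := fun i => by
    rw [C_neg, neg_mul, sub_eq_add_neg]
  simp_rw [signedEsymmPoly, hterm, prod_one_add, sum_powerset, card_univ, Fintype.card_fin]
  refine sum_congr rfl fun p _ => ?_
  rw [esymm, mul_sum, map_sum, sum_mul]
  refine sum_congr rfl fun t ht => ?_
  rw [prod_mul_distrib, prod_const, ← map_prod, prod_neg, (mem_powersetCard.mp ht).2]

theorem eval_one_signedEsymmPoly {n : ℕ} (z : Fin n → ℝ) :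
    (signedEsymmPoly z).eval 1 = ∑ p ∈ range (n + 1), (-1) ^ p * esymm z p := by
  simp [signedEsymmPoly_eq_sum, eval_finsetSum]

theorem eval_one_derivative_signedEsymmPoly {n : ℕ} (z : Fin n → ℝ) :
    (derivative (signedEsymmPoly z)).eval 1 =
      ∑ p ∈ range (n + 1), (-1) ^ p * (p : ℝ) * esymm z p := by
  simp only [signedEsymmPoly_eq_sum, derivative_sum, derivative_C_mul_X_pow, eval_finsetSum,
    eval_C_mul, eval_pow, eval_X, one_pow, mul_one]
  exact sum_congr rfl fun p _ => by ring

theorem signedEsymmPoly_comp_append {a b : ℕ} (f : ℝ → ℝ) (x : Fin a → ℝ) (y : Fin b → ℝ) :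
    signedEsymmPoly (fun i => f (Fin.append x y i)) =
      signedEsymmPoly (fun i => f (x i)) * signedEsymmPoly (fun i => f (y i)) :=
  Fin.prod_comp_append (fun t => 1 - C (f t) * X) x y

theorem Pcl_eq_mul_eval {n : ℕ} (x : Fin n → ℝ) :
    Pcl x = (∏ i, td (x i)) * (signedEsymmPoly fun i => Real.exp (x i)).eval 1 := by
  rw [Pcl, eval_one_signedEsymmPoly]

theorem Pcl'_eq_mul_eval_derivative {n : ℕ} (x : Fin n → ℝ) :
    Pcl' x = (∏ i, td (x i)) * (derivative (signedEsymmPoly fun i => Real.exp (x i))).eval 1 := by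
  rw [Pcl', eval_one_derivative_signedEsymmPoly]

/-- Leibniz rule `P'(x ⧺ y) = P'(x)·P(y) + P(x)·P'(y)`. -/
theorem Pcl'_append (a b : ℕ) (x : Fin a → ℝ) (y : Fin b → ℝ) :
    Pcl' (Fin.append x y) = Pcl' x * Pcl y + Pcl x * Pcl' y := by
  simp only [Pcl'_eq_mul_eval_derivative, Pcl_eq_mul_eval, Fin.prod_comp_append,
    signedEsymmPoly_comp_append, derivative_mul, eval_add, eval_mul]
  ring
end

section
/- For every r ≥ 1 and every tuple x ∈ ℝ^r, P'(x) = Σ_{i=1}^r P'(x_i) · ∏_{j ≠ i} P(x_j), where for a single real number u one has P(u) = −u and P'(u) = −td(u) · exp(u). -/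
/-!
With `y i = exp (x i)`, the sum `∑ p, (-1) ^ p * p * e_p(y)` is the derivative at `t = 1` of
`∏ i, (1 - t * y i)`, namely `∑ i, -y i * ∏ j ≠ i, (1 - y j)`; and `td u * (1 - exp u) = -u`
turns each factor `td (x j) * (1 - y j)` into `-x j`.
-/

theorem td_mul_one_sub_exp (u : ℝ) : td u * (1 - Real.exp u) = -u := by
  by_cases hu : u = 0
  · simp [td, hu]
  · have hexp : Real.exp u - 1 ≠ 0 := sub_ne_zero.mpr (Real.exp_eq_one_iff u |>.not.mpr hu)
    rw [td, if_neg hu]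
    field_simp
    ring

namespace Finset

variable {ι R : Type*} [DecidableEq ι] [CommSemiring R]

theorem sum_powerset_card_mul_prod (s : Finset ι) (z : ι → R) :
    ∑ u ∈ s.powerset, (u.card : R) * ∏ i ∈ u, z i =
      ∑ i ∈ s, z i * ∏ j ∈ s.erase i, (1 + z j) := by
  induction s using Finset.induction_on with
  | empty => simp
  | @insert a s ha ih =>
    have hinsert : ∀ u ∈ s.powerset,
        ((insert a u).card : R) * ∏ i ∈ insert a u, z i =
          z a * ((u.card : R) * ∏ i ∈ u, z i + ∏ i ∈ u, z i) := by
      intro u hu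
      have hau : a ∉ u := fun h => ha (mem_powerset.mp hu h)
      rw [card_insert_of_notMem hau, prod_insert hau]
      push_cast
      ring
    have herase : ∀ i ∈ s, z i * ∏ j ∈ (insert a s).erase i, (1 + z j) =
        (1 + z a) * (z i * ∏ j ∈ s.erase i, (1 + z j)) := by
      intro i hi
      have hia : a ≠ i := fun h => ha (h ▸ hi)
      rw [erase_insert_of_ne hia, prod_insert (notMem_mono (erase_subset i s) ha)]
      ring
    rw [sum_powerset_insert ha, sum_congr rfl hinsert, ← mul_sum, sum_add_distrib,
      ← prod_one_add, sum_insert ha, erase_insert ha, sum_congr rfl herase, ← mul_sum, ih]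
    ring

end Finset

theorem sum_range_mul_esymm {n : ℕ} (f : ℕ → ℝ) (y : Fin n → ℝ) :
    ∑ p ∈ Finset.range (n + 1), f p * esymm y p =
      ∑ u ∈ (Finset.univ : Finset (Fin n)).powerset, f u.card * ∏ i ∈ u, y i := by
  rw [Finset.sum_powerset, Finset.card_univ, Fintype.card_fin]
  refine Finset.sum_congr rfl fun p _ => ?_
  rw [esymm, Finset.mul_sum]
  refine Finset.sum_congr rfl fun u hu => ?_
  rw [(Finset.mem_powersetCard.mp hu).2]

theorem sum_range_neg_one_pow_mul_esymm {n : ℕ} (y : Fin n → ℝ) :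
    ∑ p ∈ Finset.range (n + 1), (-1 : ℝ) ^ p * (p : ℝ) * esymm y p =
      ∑ i, -y i * ∏ j ∈ Finset.univ.erase i, (1 - y j) := by
  have hsigns : ∀ u : Finset (Fin n),
      (-1 : ℝ) ^ u.card * (u.card : ℝ) * ∏ i ∈ u, y i = u.card * ∏ i ∈ u, -y i := by
    intro u
    rw [Finset.prod_neg]
    ring
  simp_rw [sum_range_mul_esymm (fun p => (-1 : ℝ) ^ p * (p : ℝ)), hsigns,
    Finset.sum_powerset_card_mul_prod, ← sub_eq_add_neg]

theorem Pcl'_eq_sum_general (r : ℕ) (x : Fin r → ℝ) :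
    Pcl' x =
      ∑ i, (-(td (x i) * Real.exp (x i))) *
        ∏ j ∈ Finset.univ.erase i, (-(x j)) := by
  rw [Pcl', sum_range_neg_one_pow_mul_esymm, Finset.mul_sum]
  refine Finset.sum_congr rfl fun i _ => ?_
  rw [Finset.prod_congr rfl fun j _ => (td_mul_one_sub_exp (x j)).symm, Finset.prod_mul_distrib,
    ← Finset.mul_prod_erase Finset.univ (fun j => td (x j)) (Finset.mem_univ i)]
  ring

/-- for `r ≥ 1`,
`P'(x) = Σ_i P'(x_i) · ∏_{j ≠ i} P(x_j)` with `P(u) = −u` and `P'(u) = −td(u)·exp(u)`. -/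
theorem Pcl'_eq_sum (r : ℕ) (hr : 1 ≤ r) (x : Fin r → ℝ) :
    Pcl' x =
      ∑ i, (-(td (x i) * Real.exp (x i))) *
        ∏ j ∈ Finset.univ.erase i, (-(x j)) :=
  Pcl'_eq_sum_general r x
end
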